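/- arXiv:1202.2265 — 5 statements merged into one kernel-verified Lean document; each statement's English description precedes it below -/
import Mathlib

section
/- Let q be a real number with q ≠ 1, and let x₁, …, x_n be pairwise distinct scalars. Then for every x with x ≠ 0 and x ≠ x_k for all k, the q-logarithmic derivative of the polynomial ∏_{k=1}^n (x − x_k) equals the finite sum D_q(∏_{k=1}^n (x − x_k)) / ∏_{k=1}^n (x − x_k) = 1/(x − x₁) + ((qx − x₁)/(x − x₁))·1/(x − x₂) + ((qx − x₁)/(x − x₁))·((qx − x₂)/(x − x₂))·1/(x − x₃) + ⋯ + ((qx − x₁)/(x − x₁)) ⋯ ((qx − x_{n−1})/(x − x_{n−1}))·1/(x − x_n), i.e. the sum over k = 1, …, n of (∏_{j=1}^{k−1} (qx − x_j)/(x − x_j)) · 1/(x − x_k). -/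
/-- The Jackson q-derivative: `(D_q f)(x) = (f(qx) - f(x)) / ((q-1)x)`. -/
noncomputable def qDeriv (q : ℝ) (f : ℝ → ℝ) (x : ℝ) : ℝ :=
  (f (q * x) - f x) / ((q - 1) * x)

lemma tele (n : ℕ) (r : Fin n → ℝ) :
    ∑ k, (∏ j ∈ Finset.Iio k, r j) * (r k - 1) = ∏ k, r k - 1 := by
  induction n with
  | zero => simp
  | succ m ih =>
    rw [Fin.sum_univ_castSucc, Fin.prod_univ_castSucc]
    have h1 : ∀ k : Fin m, ∏ j ∈ Finset.Iio (Fin.castSucc k), r j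
        = ∏ j ∈ Finset.Iio k, r (Fin.castSucc j) := by
      intro k
      rw [Fin.Iio_castSucc, Finset.prod_map]
      rfl
    have h2 : ∏ j ∈ Finset.Iio (Fin.last m), r j = ∏ k : Fin m, r (Fin.castSucc k) := by
      rw [Fin.Iio_last_eq_map, Finset.prod_map]
      rfl
    simp only [h1, h2, ih fun k => r (Fin.castSucc k)]
    ring

/-- Simple pole expansion of the q-logarithmic derivative of `∏_{k=1}^n (x - x_k)`
for pairwise distinct `x_k`:
`D_q(∏_k (x - x_k)) / ∏_k (x - x_k)
  = ∑_k (∏_{j<k} (qx - x_j)/(x - x_j)) · 1/(x - x_k)`. -/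
theorem qDeriv_log_polynomial_pole_expansion (q : ℝ) (hq : q ≠ 1) (n : ℕ)
    (a : Fin n → ℝ) (ha : Function.Injective a)
    (x : ℝ) (hx : x ≠ 0) (hxa : ∀ k, x ≠ a k) :
    qDeriv q (fun y => ∏ k, (y - a k)) x / ∏ k, (x - a k) =
      ∑ k, (∏ j ∈ Finset.Iio k, (q * x - a j) / (x - a j)) * (1 / (x - a k)) := by
  have hne : ∀ k, x - a k ≠ 0 := fun k => sub_ne_zero.mpr (hxa k)
  have hqx : (q - 1) * x ≠ 0 := mul_ne_zero (sub_ne_zero.mpr hq) hx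
  set r : Fin n → ℝ := fun k => (q * x - a k) / (x - a k) with hr
  have hrk : ∀ k, r k - 1 = (q - 1) * x * (1 / (x - a k)) := by
    intro k
    rw [hr, div_sub_one (hne k), mul_one_div]
    congr 1
    ring
  have key := tele n r
  have hprod : ∏ k, r k = (∏ k, (q * x - a k)) / ∏ k, (x - a k) := by
    rw [Finset.prod_div_distrib]
  rw [hprod] at key
  have hP : (∏ k, (x - a k)) ≠ 0 := Finset.prod_ne_zero_iff.mpr fun k _ => hne k
  simp only [hrk] at key
  have : ∑ k, (∏ j ∈ Finset.Iio k, r j) * ((q - 1) * x * (1 / (x - a k)))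
      = (q - 1) * x * ∑ k, (∏ j ∈ Finset.Iio k, r j) * (1 / (x - a k)) := by
    rw [Finset.mul_sum]
    congr 1
    ext k
    ring
  rw [this] at key
  unfold qDeriv
  rw [div_div]
  field_simp at key ⊢
  linarith [key]
end

section
/- Let q ≠ 1 and define the q-Bernoulli polynomials B_n^q(x) by the formal power series generating function in z: z·e_q(xz)·e_q(−z/2) / (e_q(z/2) − e_q(−z/2)) = ∑_{n=0}^∞ B_n^q(x) z^n/[n]_q!, where the coefficients B_n^q(x) are polynomials in x. Then B_0^q(x) = 1 and for all n ≥ 1 the q-Bernoulli polynomials satisfy the recursion formula D_q^x B_n^q(x) = [n]_q B_{n−1}^q(x), where D_q^x is the Jackson q-derivative in the variable x. -/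
/-- The q-number `[n]_q = (qⁿ - 1)/(q - 1)`. -/
noncomputable def qNum (q : ℝ) (n : ℕ) : ℝ := (q ^ n - 1) / (q - 1)

/-- The q-factorial `[n]_q! = [1]_q [2]_q ⋯ [n]_q` (with `[0]_q! = 1`). -/
noncomputable def qFact (q : ℝ) (n : ℕ) : ℝ := ∏ i ∈ Finset.range n, qNum q (i + 1)

/-- Jackson's q-exponential `e_q(cz) = ∑_n cⁿ zⁿ/[n]_q!` as a formal power series in `z`. -/
noncomputable def qExpSeries (q c : ℝ) : PowerSeries ℝ :=
  PowerSeries.mk fun n => c ^ n / qFact q n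

lemma qFact_succ (q : ℝ) (n : ℕ) : qFact q (n + 1) = qFact q n * qNum q (n + 1) := by
  simp [qFact, Finset.prod_range_succ]

lemma qFact_zero (q : ℝ) : qFact q 0 = 1 := by simp [qFact]

lemma qFact_one (q : ℝ) (hq : q ≠ 1) : qFact q 1 = 1 := by
  have : q - 1 ≠ 0 := sub_ne_zero.mpr hq
  simp [qFact, qNum]
  field_simp
  exact this

/-- If the q-Bernoulli polynomials `B_n^q(x)` are defined by the generating function
`z e_q(xz) e_q(-z/2) / (e_q(z/2) - e_q(-z/2)) = ∑_n B_n^q(x) zⁿ/[n]_q!`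
(stated multiplicatively, since `e_q(z/2) - e_q(-z/2) = z(1 + O(z²))`), then
`B_0^q(x) = 1` and `D_q^x B_n^q(x) = [n]_q B_{n-1}^q(x)` for all `n ≥ 1`. -/
theorem qBernoulliPoly_recursion (q : ℝ) (hq : q ≠ 1) (B : ℕ → ℝ → ℝ)
    (hB : ∀ x : ℝ,
      PowerSeries.X * qExpSeries q x * qExpSeries q (-(1/2)) =
        PowerSeries.mk (fun n => B n x / qFact q n) *
          (qExpSeries q (1/2) - qExpSeries q (-(1/2)))) :
    (∀ x : ℝ, B 0 x = 1) ∧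
      ∀ n : ℕ, 1 ≤ n → ∀ x : ℝ, x ≠ 0 →
        qDeriv q (fun y => B n y) x = qNum q n * B (n - 1) x := by
  have hq' : q - 1 ≠ 0 := sub_ne_zero.mpr hq
  -- Part 1 : B 0 x = 1, from the coefficient of z¹ in the generating identity.
  have hB0 : ∀ x : ℝ, B 0 x = 1 := by
    intro x
    have h := congrArg (PowerSeries.coeff 1) (hB x)
    simp only [PowerSeries.coeff_one_mul, map_sub, map_mul,
      PowerSeries.constantCoeff_X, PowerSeries.coeff_succ_X_mul,
      qExpSeries, PowerSeries.coeff_mk, PowerSeries.constantCoeff_mk,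
      PowerSeries.coeff_zero_eq_constantCoeff] at h
    rw [qFact_zero, qFact_one q hq] at h
    norm_num at h
    linarith [h]
  refine ⟨hB0, ?_⟩
  -- Part 2 : the recursion. First dispose of the degenerate case q = -1.
  rcases eq_or_ne q (-1) with rfl | hqm
  · exfalso
    have h := congrArg (PowerSeries.coeff 3) (hB 1)
    have ha3 : (Finset.HasAntidiagonal.antidiagonal 3 : Finset (ℕ × ℕ)) = {(0,3),(1,2),(2,1),(3,0)} := rfl
    have hf2 : qFact (-1) 2 = 0 := by
      simp [qFact, Finset.prod_range_succ, qNum]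
    have hf3 : qFact (-1) 3 = 0 := by
      rw [qFact_succ, hf2, zero_mul]
    have ha2 : (Finset.HasAntidiagonal.antidiagonal 2 : Finset (ℕ × ℕ)) = {(0,2),(1,1),(2,0)} := rfl
    rw [mul_assoc, PowerSeries.coeff_succ_X_mul] at h
    rw [PowerSeries.coeff_mul, PowerSeries.coeff_mul, ha2, ha3] at h
    simp [qExpSeries, Finset.sum_insert, hf2, hf3, qFact_zero,
      qFact_one (-1) (by norm_num)] at h
  -- From now on, q ≠ ±1, so all q-numbers and q-factorials are nonzero.
  have hpow : ∀ n : ℕ, q ^ (n + 1) ≠ 1 := by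
    intro n hn
    rcases (pow_eq_one_iff_of_ne_zero (Nat.succ_ne_zero n)).1 hn with h | ⟨h, _⟩
    · exact hq h
    · exact hqm h
  have hnum : ∀ n : ℕ, qNum q (n + 1) ≠ 0 := by
    intro n
    simp only [qNum]
    exact div_ne_zero (sub_ne_zero.mpr (hpow n)) hq'
  have hfact : ∀ n : ℕ, qFact q n ≠ 0 := by
    intro n
    induction n with
    | zero => simp [qFact_zero]
    | succ k ih => rw [qFact_succ]; exact mul_ne_zero ih (hnum k)
  -- The denominator series is nonzero.
  have hD : qExpSeries q (1/2) - qExpSeries q (-(1/2)) ≠ 0 := by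
    intro h
    have h1 := congrArg (PowerSeries.coeff 1) h
    simp [qExpSeries, qFact_one q hq] at h1
  -- Key series identity: E(qx) - E(x) = (q-1)x · X · E(x).
  have hA : ∀ x : ℝ, qExpSeries q (q * x) - qExpSeries q x =
      PowerSeries.C ((q - 1) * x) * (PowerSeries.X * qExpSeries q x) := by
    intro x
    ext n
    cases n with
    | zero => simp [qExpSeries, qFact_zero]
    | succ k =>
      simp only [map_sub, qExpSeries, PowerSeries.coeff_mk, PowerSeries.coeff_C_mul,
        PowerSeries.coeff_succ_X_mul]
      rw [qFact_succ, mul_pow]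
      rw [qNum]
      have hk := hfact k
      have hk1 : q ^ (k + 1) - 1 ≠ 0 := sub_ne_zero.mpr (hpow k)
      field_simp
      ring
  -- Deduce the recursion at the level of the B-generating series.
  have key : ∀ x : ℝ,
      (PowerSeries.mk (fun n => B n (q * x) / qFact q n) : PowerSeries ℝ) -
        PowerSeries.mk (fun n => B n x / qFact q n) =
      PowerSeries.C ((q - 1) * x) *
        (PowerSeries.X * PowerSeries.mk (fun n => B n x / qFact q n)) := by
    intro x
    apply mul_right_cancel₀ hD
    rw [sub_mul, ← hB (q * x), ← hB x]
    calc PowerSeries.X * qExpSeries q (q * x) * qExpSeries q (-(1/2)) -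
          PowerSeries.X * qExpSeries q x * qExpSeries q (-(1/2))
        = PowerSeries.X * (qExpSeries q (q * x) - qExpSeries q x) *
            qExpSeries q (-(1/2)) := by ring
      _ = PowerSeries.C ((q - 1) * x) * PowerSeries.X *
            (PowerSeries.X * qExpSeries q x * qExpSeries q (-(1/2))) := by
          rw [hA x]; ring
      _ = PowerSeries.C ((q - 1) * x) * PowerSeries.X *
            (PowerSeries.mk (fun n => B n x / qFact q n) *
              (qExpSeries q (1/2) - qExpSeries q (-(1/2)))) := by rw [hB x]
      _ = PowerSeries.C ((q - 1) * x) *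
            (PowerSeries.X * PowerSeries.mk (fun n => B n x / qFact q n)) *
            (qExpSeries q (1/2) - qExpSeries q (-(1/2))) := by ring
  -- Extract coefficients and conclude.
  intro n hn x hx
  obtain ⟨k, rfl⟩ : ∃ k, n = k + 1 := ⟨n - 1, (Nat.succ_pred_eq_of_pos hn).symm⟩
  have h := congrArg (PowerSeries.coeff (k + 1)) (key x)
  simp only [map_sub, PowerSeries.coeff_mk, PowerSeries.coeff_C_mul,
    PowerSeries.coeff_succ_X_mul] at h
  have hk1 := hfact (k + 1)
  have hk := hfact k
  have hrec : B (k + 1) (q * x) - B (k + 1) x = (q - 1) * x * qNum q (k + 1) * B k x := by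
    have h2 : (B (k + 1) (q * x) - B (k + 1) x) / qFact q (k + 1) =
        (q - 1) * x * (B k x / qFact q k) := by rw [sub_div]; exact h
    have h3 := congrArg (· * qFact q (k + 1)) h2
    simp only [div_mul_cancel₀ _ hk1] at h3
    rw [h3, qFact_succ]
    field_simp
  simp only [qDeriv, Nat.add_sub_cancel]
  rw [hrec]
  field_simp
end

section
/- Let q ≠ 1 and define the q-Bernoulli numbers b_n^q by the formal power series generating function z·e_q(−z/2)/(e_q(z/2) − e_q(−z/2)) = ∑_{n=0}^∞ b_n^q z^n/[n]_q!. Define, as formal power series over ℂ in the variable t, sin_q t = (e_q(it) − e_q(−it))/(2i) and cos_q t = (e_q(it) + e_q(−it))/2. Then the following formal power series identity holds: t·cos_q t / sin_q t = 1 + ∑_{k=1}^∞ b_{2k}^q (2i t)^{2k}/[2k]_q!, i.e. t·cos_q t = sin_q t · (1 + ∑_{k=1}^∞ b_{2k}^q (−4)^k t^{2k}/[2k]_q!). -/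
/-- The q-number `[n]_q = (qⁿ - 1)/(q - 1)` (over ℂ). -/
noncomputable def qNumC (q : ℂ) (n : ℕ) : ℂ := (q ^ n - 1) / (q - 1)

/-- The q-factorial `[n]_q! = [1]_q [2]_q ⋯ [n]_q` (with `[0]_q! = 1`), over ℂ. -/
noncomputable def qFactC (q : ℂ) (n : ℕ) : ℂ := ∏ i ∈ Finset.range n, qNumC q (i + 1)

/-- Jackson's q-exponential `e_q(ct) = ∑_n cⁿ tⁿ/[n]_q!` as a formal power series in `t` over ℂ. -/
noncomputable def qExpSeriesC (q c : ℂ) : PowerSeries ℂ :=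
  PowerSeries.mk fun n => c ^ n / qFactC q n

/-- `sin_q t = (e_q(it) - e_q(-it))/(2i)` as a formal power series in `t`. -/
noncomputable def qSinSeries (q : ℂ) : PowerSeries ℂ :=
  PowerSeries.C (R := ℂ) (1 / (2 * Complex.I)) *
    (qExpSeriesC q Complex.I - qExpSeriesC q (-Complex.I))

/-- `cos_q t = (e_q(it) + e_q(-it))/2` as a formal power series in `t`. -/
noncomputable def qCosSeries (q : ℂ) : PowerSeries ℂ :=
  PowerSeries.C (R := ℂ) (1 / 2) *
    (qExpSeriesC q Complex.I + qExpSeriesC q (-Complex.I))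

lemma rescale_qExp (q c a : ℂ) :
    PowerSeries.rescale a (qExpSeriesC q c) = qExpSeriesC q (a * c) := by
  ext n
  simp [PowerSeries.coeff_rescale, qExpSeriesC, mul_pow, mul_div_assoc]

lemma qFactC_one (q : ℂ) (hq : q ≠ 1) : qFactC q 1 = 1 := by
  simp [qFactC, qNumC, div_self (sub_ne_zero.mpr hq)]

/-- If the q-Bernoulli numbers `b_n^q` are defined by the generating function
`z e_q(-z/2) / (e_q(z/2) - e_q(-z/2)) = ∑_n b_n^q zⁿ/[n]_q!`
(stated multiplicatively), then the formal power series identity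
`t cos_q t = sin_q t · (1 + ∑_{k≥1} b_{2k}^q (2it)^{2k}/[2k]_q!)` holds,
i.e. `t cos_q t = sin_q t · (1 + ∑_{k≥1} b_{2k}^q (-4)^k t^{2k}/[2k]_q!)`. -/
theorem qCot_qBernoulli_expansion (q : ℂ) (hq : q ≠ 1) (b : ℕ → ℂ)
    (hb : PowerSeries.X * qExpSeriesC q (-(1/2)) =
      PowerSeries.mk (fun n => b n / qFactC q n) *
        (qExpSeriesC q (1/2) - qExpSeriesC q (-(1/2)))) :
    PowerSeries.X * qCosSeries q =
      qSinSeries q *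
        (1 + PowerSeries.mk fun n =>
          if n ≠ 0 ∧ n % 2 = 0 then b n * (-4 : ℂ) ^ (n / 2) / qFactC q n else 0) := by
  have hI : Complex.I ≠ 0 := Complex.I_ne_zero
  -- b 0 = 1
  have hb0 : b 0 = 1 := by
    have h := congrArg (PowerSeries.coeff (R := ℂ) 1) hb
    rw [PowerSeries.coeff_succ_X_mul, PowerSeries.coeff_mul] at h
    have had : (Finset.HasAntidiagonal.antidiagonal 1 : Finset (ℕ × ℕ)) = {(0, 1), (1, 0)} := by decide
    rw [had] at h
    have h1q : qNumC q 1 = 1 := by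
      simp [qNumC, div_self (sub_ne_zero.mpr hq)]
    simp [qExpSeriesC, qFactC, h1q] at h
    norm_num at h
    exact h.symm
  -- rescaled hb
  have h1 := congrArg (PowerSeries.rescale (2 * Complex.I)) hb
  have h2 := congrArg (PowerSeries.rescale (-(2 * Complex.I))) hb
  simp only [map_mul, map_sub, PowerSeries.rescale_X, rescale_qExp] at h1 h2
  rw [show (2 * Complex.I) * -(1/2) = -Complex.I by ring,
    show (2 * Complex.I) * (1/2) = Complex.I by ring] at h1
  rw [show (-(2 * Complex.I)) * -(1/2) = Complex.I by ring,
    show (-(2 * Complex.I)) * (1/2) = -Complex.I by ring, map_neg] at h2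
  set B1 := PowerSeries.rescale (2 * Complex.I) (PowerSeries.mk fun n => b n / qFactC q n)
    with hB1
  set B2 := PowerSeries.rescale (-(2 * Complex.I)) (PowerSeries.mk fun n => b n / qFactC q n)
    with hB2
  have hS : (1 + PowerSeries.mk fun n =>
      if n ≠ 0 ∧ n % 2 = 0 then b n * (-4 : ℂ) ^ (n / 2) / qFactC q n else 0) =
      PowerSeries.C (R := ℂ) (1/2) * (B2 + B1) := by
    ext n
    rw [hB1, hB2]
    simp only [map_add, PowerSeries.coeff_C_mul, map_add, PowerSeries.coeff_rescale,
      PowerSeries.coeff_mk, PowerSeries.coeff_one]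
    rcases Nat.eq_zero_or_pos n with rfl | hn
    · simp [qFactC, hb0]
      norm_num
    · rcases Nat.even_or_odd n with he | ho
      · have h2n : n = 2 * (n / 2) := (Nat.two_mul_div_two_of_even he).symm
        have hpow : (2 * Complex.I) ^ n = (-4 : ℂ) ^ (n / 2) := by
          rw [h2n, pow_mul]
          norm_num [mul_pow, Complex.I_sq]
        have hpow' : (-(2 * Complex.I)) ^ n = (-4 : ℂ) ^ (n / 2) := by
          rw [h2n, pow_mul, neg_sq]
          norm_num [mul_pow, Complex.I_sq]
        rw [hpow, hpow', if_neg hn.ne',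
          if_pos (⟨hn.ne', Nat.even_iff.mp he⟩ : n ≠ 0 ∧ n % 2 = 0)]
        ring
      · rw [if_neg hn.ne',
          if_neg (show ¬(n ≠ 0 ∧ n % 2 = 0) by simp [Nat.odd_iff.mp ho]), Odd.neg_pow ho]
        ring
  rw [← map_mul] at h1
  have hC : PowerSeries.C (R := ℂ) (1 / (2 * Complex.I)) * PowerSeries.C (R := ℂ) (2 * Complex.I) = 1 := by
    rw [← map_mul, one_div, inv_mul_cancel₀ (by simp [Complex.I_ne_zero]), map_one]
  rw [hS, qCosSeries, qSinSeries]
  linear_combination (PowerSeries.C (R := ℂ) (1 / (2 * Complex.I)) * PowerSeries.C (R := ℂ) (1/2)) * h1 -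
    (PowerSeries.C (R := ℂ) (1 / (2 * Complex.I)) * PowerSeries.C (R := ℂ) (1/2)) * h2 -
    (PowerSeries.C (R := ℂ) (1/2) * PowerSeries.X *
      (qExpSeriesC q Complex.I + qExpSeriesC q (-Complex.I))) * hC
end

section
/- Let q > 1 be real, let b_2^q = (1/4)([2]_q − 1/[3]_q − q) and b_4^q = ([4]_q/2⁴)([3]_q! − [2]_q³ + [4]_q²/[3]_q! − q/[2]_q! − ([5]_q q⁶ + 1)/([5]_q [4]_q)) be the second and fourth q-Bernoulli numbers. Let (x_n)_{n≥1} be a sequence of nonzero real numbers with 0 < |x₁| < |x₂| < ⋯ and ∑_{n=1}^∞ 1/x_n² < ∞, such that sin_q x = x·∏_{n=1}^∞ (1 − x²/x_n²) for all real x. Then the sum of reciprocal fourth powers of the zeros satisfies [2]_q · q · (1 + (q² − 1)/2) · ∑_{k=1}^∞ 1/x_k⁴ = (8(q² − 1)/([2]_q³ q))·(b_2^q)² − (16/[4]_q!)·b_4^q. -/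
/-- The q-sine function `sin_q x = ∑_{m=0}^∞ (-1)^m x^{2m+1}/[2m+1]_q!`. -/
noncomputable def qSin (q : ℝ) (x : ℝ) : ℝ :=
  ∑' m : ℕ, (-1 : ℝ) ^ m * x ^ (2 * m + 1) / qFact q (2 * m + 1)

lemma abs_log_one_sub_le {y : ℝ} (hy : 0 ≤ y) (hy2 : y ≤ 1 / 2) :
    |Real.log (1 - y)| ≤ 2 * y := by
  have h1 : (0:ℝ) < 1 - y := by linarith
  have hlog : Real.log (1 - y) ≤ 0 := Real.log_nonpos (by linarith) (by linarith)
  rw [abs_of_nonpos hlog, ← Real.log_inv]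
  have h2 := Real.log_le_sub_one_of_pos (inv_pos.mpr h1)
  have h3 : (1 - y)⁻¹ ≤ 1 + 2 * y := by
    rw [← one_div, div_le_iff₀ h1]; nlinarith
  linarith
/-- Second-order approximation of a finite product `∏ (1 - u aₙ)`. -/
lemma prod_one_sub_approx (a : ℕ → ℝ) (ha : ∀ n, 0 ≤ a n) (u S : ℝ) (hu : 0 ≤ u)
    (hu1 : ∀ n, u * a n ≤ 1) (hS : ∀ N, (∑ n ∈ Finset.range N, a n) ≤ S) (N : ℕ) :
    |(∏ n ∈ Finset.range N, (1 - u * a n)) -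
      (1 - u * (∑ n ∈ Finset.range N, a n) +
        u ^ 2 * ((∑ n ∈ Finset.range N, a n) ^ 2 - ∑ n ∈ Finset.range N, (a n) ^ 2) / 2)| ≤
    u ^ 3 * (S ^ 2 / 2) * (∑ n ∈ Finset.range N, a n) := by
  induction N with
  | zero => simp
  | succ N ih =>
    set s1 := ∑ n ∈ Finset.range N, a n with hs1def
    set s2 := ∑ n ∈ Finset.range N, (a n) ^ 2 with hs2def
    set P := ∏ n ∈ Finset.range N, (1 - u * a n) with hPdef
    have hs1nonneg : 0 ≤ s1 := Finset.sum_nonneg fun i _ => ha i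
    have hs1S : s1 ≤ S := hS N
    have hs2nonneg : 0 ≤ s2 := Finset.sum_nonneg fun i _ => sq_nonneg _
    have hs2le : s2 ≤ s1 ^ 2 := by
      have : ∀ i ∈ Finset.range N, (a i) ^ 2 ≤ a i * s1 := by
        intro i hi
        have hile : a i ≤ s1 := Finset.single_le_sum (fun j _ => ha j) hi
        have := mul_le_mul_of_nonneg_left hile (ha i)
        simpa [pow_two] using this
      calc s2 ≤ ∑ i ∈ Finset.range N, a i * s1 := Finset.sum_le_sum this
        _ = s1 ^ 2 := by rw [← Finset.sum_mul]; ring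
    have hSnonneg : 0 ≤ S := le_trans hs1nonneg hs1S
    rw [Finset.prod_range_succ, Finset.sum_range_succ, Finset.sum_range_succ]
    have key : P * (1 - u * a N) -
        (1 - u * (s1 + a N) + u ^ 2 * ((s1 + a N) ^ 2 - (s2 + (a N) ^ 2)) / 2)
        = (P - (1 - u * s1 + u ^ 2 * (s1 ^ 2 - s2) / 2)) * (1 - u * a N)
          - u ^ 3 * a N * ((s1 ^ 2 - s2) / 2) := by ring
    rw [← hs1def, ← hs2def, ← hPdef, key]
    have h1 : |1 - u * a N| ≤ 1 := by
      rw [abs_le]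
      constructor
      · nlinarith [mul_nonneg hu (ha N), hu1 N]
      · nlinarith [mul_nonneg hu (ha N)]
    have h2 : |(s1 ^ 2 - s2) / 2| ≤ S ^ 2 / 2 := by
      rw [abs_div, abs_of_nonneg (by linarith : (0:ℝ) ≤ s1 ^ 2 - s2)]
      have : s1 ^ 2 ≤ S ^ 2 := by nlinarith
      simp only [abs_two]
      linarith
    calc |(P - (1 - u * s1 + u ^ 2 * (s1 ^ 2 - s2) / 2)) * (1 - u * a N)
          - u ^ 3 * a N * ((s1 ^ 2 - s2) / 2)|
        ≤ |(P - (1 - u * s1 + u ^ 2 * (s1 ^ 2 - s2) / 2)) * (1 - u * a N)|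
          + |u ^ 3 * a N * ((s1 ^ 2 - s2) / 2)| := abs_sub _ _
      _ ≤ |P - (1 - u * s1 + u ^ 2 * (s1 ^ 2 - s2) / 2)| * 1
          + u ^ 3 * a N * (S ^ 2 / 2) := by
          rw [abs_mul, abs_mul, abs_mul,
            abs_of_nonneg (show (0:ℝ) ≤ u ^ 3 by positivity), abs_of_nonneg (ha N)]
          exact add_le_add (mul_le_mul_of_nonneg_left h1 (abs_nonneg _))
            (mul_le_mul_of_nonneg_left h2 (mul_nonneg (by positivity) (ha N)))
      _ ≤ u ^ 3 * (S ^ 2 / 2) * s1 + u ^ 3 * a N * (S ^ 2 / 2) := by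
          rw [mul_one]; linarith [ih]
      _ = u ^ 3 * (S ^ 2 / 2) * (s1 + a N) := by ring
lemma one_le_qNum {q : ℝ} (hq : 1 < q) (n : ℕ) : 1 ≤ qNum q (n + 1) := by
  rw [qNum, le_div_iff₀ (by linarith)]
  have h1 : q ≤ q ^ (n + 1) := le_self_pow₀ (by linarith) (Nat.succ_ne_zero n)
  linarith

lemma one_le_qFact {q : ℝ} (hq : 1 < q) (n : ℕ) : 1 ≤ qFact q n := by
  induction n with
  | zero => simp [qFact]
  | succ n ih =>
    rw [qFact, Finset.prod_range_succ, ← qFact]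
    nlinarith [one_le_qNum hq n]

lemma qFact_pos {q : ℝ} (hq : 1 < q) (n : ℕ) : 0 < qFact q n :=
  lt_of_lt_of_le one_pos (one_le_qFact hq n)

lemma qSin_summable {q : ℝ} (hq : 1 < q) (t : ℝ) (ht : t ^ 2 ≤ 1 / 2) :
    Summable fun m : ℕ => (-1 : ℝ) ^ m * t ^ (2 * m + 1) / qFact q (2 * m + 1) := by
  have hgeom : Summable fun m : ℕ => |t| * (t ^ 2) ^ m :=
    (summable_geometric_of_lt_one (sq_nonneg t) (by linarith)).mul_left _
  have hbound : ∀ m : ℕ,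
      ‖(-1 : ℝ) ^ m * t ^ (2 * m + 1) / qFact q (2 * m + 1)‖ ≤ |t| * (t ^ 2) ^ m := by
    intro m
    rw [Real.norm_eq_abs, abs_div, abs_mul, abs_pow, abs_pow, abs_neg, abs_one, one_pow, one_mul,
      abs_of_nonneg (le_of_lt (qFact_pos hq _))]
    have h1 : |t| ^ (2 * m + 1) / qFact q (2 * m + 1) ≤ |t| ^ (2 * m + 1) / 1 :=
      div_le_div_of_nonneg_left (pow_nonneg (abs_nonneg t) _) one_pos (one_le_qFact hq _)
    calc |t| ^ (2 * m + 1) / qFact q (2 * m + 1) ≤ |t| ^ (2 * m + 1) / 1 := h1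
      _ = |t| * (t ^ 2) ^ m := by
          rw [div_one, pow_add, pow_mul, pow_one, sq_abs]; ring
  exact Summable.of_norm (Summable.of_nonneg_of_le (fun m => norm_nonneg _) hbound hgeom)

lemma qSin_approx {q : ℝ} (hq : 1 < q) (t : ℝ) (ht : t ^ 2 ≤ 1 / 2) :
    |qSin q t - (t - t ^ 3 / qFact q 3 + t ^ 5 / qFact q 5)| ≤ 2 * |t| ^ 7 := by
  have hsm := qSin_summable hq t ht
  have hsplit := (hsm.sum_add_tsum_nat_add 3).symm
  have hhead : ∑ m ∈ Finset.range 3, (-1 : ℝ) ^ m * t ^ (2 * m + 1) / qFact q (2 * m + 1)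
      = t - t ^ 3 / qFact q 3 + t ^ 5 / qFact q 5 := by
    have h1 : qFact q 1 = 1 := by
      simp [qFact, qNum, Finset.prod_range_one, div_self (show q - 1 ≠ 0 by linarith)]
    simp [Finset.sum_range_succ, h1]
    ring
  rw [qSin, hsplit, hhead]
  have hg : Summable fun m : ℕ => |t| ^ 7 * (t ^ 2) ^ m :=
    (summable_geometric_of_lt_one (sq_nonneg t) (by linarith)).mul_left _
  have hbound : ∀ m : ℕ,
      ‖(-1 : ℝ) ^ (m + 3) * t ^ (2 * (m + 3) + 1) / qFact q (2 * (m + 3) + 1)‖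
        ≤ |t| ^ 7 * (t ^ 2) ^ m := by
    intro m
    rw [Real.norm_eq_abs, abs_div, abs_mul, abs_pow, abs_pow, abs_neg, abs_one, one_pow, one_mul,
      abs_of_nonneg (le_of_lt (qFact_pos hq _))]
    calc |t| ^ (2 * (m + 3) + 1) / qFact q (2 * (m + 3) + 1)
        ≤ |t| ^ (2 * (m + 3) + 1) / 1 :=
          div_le_div_of_nonneg_left (pow_nonneg (abs_nonneg t) _) one_pos (one_le_qFact hq _)
      _ = |t| ^ 7 * (t ^ 2) ^ m := by
          rw [div_one, show 2 * (m + 3) + 1 = 7 + 2 * m by ring, pow_add, pow_mul, sq_abs]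
  have hnsm : Summable fun m : ℕ =>
      ‖(-1 : ℝ) ^ (m + 3) * t ^ (2 * (m + 3) + 1) / qFact q (2 * (m + 3) + 1)‖ :=
    Summable.of_nonneg_of_le (fun m => norm_nonneg _) hbound hg
  have habs : |∑' m : ℕ, (-1 : ℝ) ^ (m + 3) * t ^ (2 * (m + 3) + 1) / qFact q (2 * (m + 3) + 1)|
      ≤ ∑' m : ℕ, |t| ^ 7 * (t ^ 2) ^ m := by
    calc |∑' m : ℕ, (-1 : ℝ) ^ (m + 3) * t ^ (2 * (m + 3) + 1) / qFact q (2 * (m + 3) + 1)|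
        ≤ ∑' m : ℕ, ‖(-1 : ℝ) ^ (m + 3) * t ^ (2 * (m + 3) + 1) / qFact q (2 * (m + 3) + 1)‖ :=
          norm_tsum_le_tsum_norm hnsm
      _ ≤ ∑' m : ℕ, |t| ^ 7 * (t ^ 2) ^ m := Summable.tsum_le_tsum hbound hnsm hg
  have hgeo : ∑' m : ℕ, |t| ^ 7 * (t ^ 2) ^ m = |t| ^ 7 * (1 - t ^ 2)⁻¹ := by
    rw [tsum_mul_left, tsum_geometric_of_lt_one (sq_nonneg t) (by linarith)]
  have hfinal : |∑' m : ℕ,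
      (-1 : ℝ) ^ (m + 3) * t ^ (2 * (m + 3) + 1) / qFact q (2 * (m + 3) + 1)| ≤ 2 * |t| ^ 7 := by
    rw [hgeo] at habs
    have h2 : (1 - t ^ 2)⁻¹ ≤ 2 := by
      rw [show (2:ℝ) = (1/2 : ℝ)⁻¹ by norm_num]
      exact inv_anti₀ (by norm_num) (by linarith)
    nlinarith [pow_nonneg (abs_nonneg t) 7, habs]
  calc |t - t ^ 3 / qFact q 3 + t ^ 5 / qFact q 5 +
        (∑' m : ℕ, (-1 : ℝ) ^ (m + 3) * t ^ (2 * (m + 3) + 1) / qFact q (2 * (m + 3) + 1)) -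
        (t - t ^ 3 / qFact q 3 + t ^ 5 / qFact q 5)|
      = |∑' m : ℕ, (-1 : ℝ) ^ (m + 3) * t ^ (2 * (m + 3) + 1) / qFact q (2 * (m + 3) + 1)| := by
        congr 1
        ring
    _ ≤ 2 * |t| ^ 7 := hfinal
lemma qAlgebra (q : ℝ) (hq : 1 < q) :
    qNum q 2 * q * (1 + (q ^ 2 - 1) / 2) * ((1 / qFact q 3) ^ 2 - 2 * (1 / qFact q 5)) =
    (8 * (q ^ 2 - 1) / ((qNum q 2) ^ 3 * q)) * ((1/4) * (qNum q 2 - 1 / qNum q 3 - q)) ^ 2 -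
    (16 / qFact q 4) * ((qNum q 4 / 2 ^ 4) *
      (qFact q 3 - (qNum q 2) ^ 3 + (qNum q 4) ^ 2 / qFact q 3 - q / qFact q 2 -
        (qNum q 5 * q ^ 6 + 1) / (qNum q 5 * qNum q 4))) := by
  have h0 : q ≠ 0 := by positivity
  have h1 : q - 1 ≠ 0 := by nlinarith
  have h2 : q ^ 2 - 1 ≠ 0 := by nlinarith
  have hpow : ∀ n : ℕ, 1 ≤ n → q ^ n - 1 ≠ 0 := by
    intro n hn
    have := one_lt_pow₀ hq (by omega : n ≠ 0)
    intro h; nlinarith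
  have h3 : q ^ 3 - 1 ≠ 0 := hpow 3 (by norm_num)
  have h4 : q ^ 4 - 1 ≠ 0 := hpow 4 (by norm_num)
  have h5 : q ^ 5 - 1 ≠ 0 := hpow 5 (by norm_num)
  simp only [qNum, qFact, Finset.prod_range_succ, Finset.prod_range_zero, one_mul]
  norm_num
  field_simp
  ring

set_option maxHeartbeats 1000000 in
/-- If `q > 1`, `b₂ = (1/4)([2]_q - 1/[3]_q - q)` and
`b₄ = ([4]_q/2⁴)([3]_q! - [2]_q³ + [4]_q²/[3]_q! - q/[2]_q! - ([5]_q q⁶ + 1)/([5]_q [4]_q))`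
are the second and fourth q-Bernoulli numbers, and `(x_n)` is a sequence of nonzero reals
with `0 < |x₁| < |x₂| < ⋯`, `∑ 1/x_n² < ∞`, and `sin_q x = x ∏_{n≥1} (1 - x²/x_n²)` for all
real `x`, then `[2]_q q (1 + (q²-1)/2) ∑_k 1/x_k⁴ = (8(q²-1)/([2]_q³ q)) b₂² - (16/[4]_q!) b₄`.
(Here `x n` denotes `x_{n+1}`.) -/
theorem qSin_zeros_sum_inverse_fourth_powers (q : ℝ) (hq : 1 < q)
    (b2 b4 : ℝ)
    (hb2 : b2 = (1/4) * (qNum q 2 - 1 / qNum q 3 - q))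
    (hb4 : b4 = (qNum q 4 / 2 ^ 4) *
      (qFact q 3 - (qNum q 2) ^ 3 + (qNum q 4) ^ 2 / qFact q 3 - q / qFact q 2 -
        (qNum q 5 * q ^ 6 + 1) / (qNum q 5 * qNum q 4)))
    (x : ℕ → ℝ) (hx0 : 0 < |x 0|) (hmono : ∀ n, |x n| < |x (n + 1)|)
    (hsum : Summable fun n => 1 / (x n) ^ 2)
    (hprod : ∀ t : ℝ, qSin q t = t * ∏' n : ℕ, (1 - t ^ 2 / (x n) ^ 2)) :
    qNum q 2 * q * (1 + (q ^ 2 - 1) / 2) * ∑' k : ℕ, 1 / (x k) ^ 4 =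
      (8 * (q ^ 2 - 1) / ((qNum q 2) ^ 3 * q)) * b2 ^ 2 - (16 / qFact q 4) * b4 := by
  -- basic facts about the zeros
  have hxpos : ∀ n, 0 < |x n| := by
    intro n
    induction n with
    | zero => exact hx0
    | succ n ih => exact lt_trans ih (hmono n)
  have hxne : ∀ n, x n ≠ 0 := fun n => abs_pos.mp (hxpos n)
  have hx0le : ∀ n, |x 0| ≤ |x n| := by
    intro n
    induction n with
    | zero => exact le_refl _
    | succ n ih => exact le_of_lt (lt_of_le_of_lt ih (hmono n))
  set a : ℕ → ℝ := fun n => 1 / (x n) ^ 2 with ha_def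
  have hxsq : ∀ n, 0 < (x n) ^ 2 := fun n => by
    have := pow_pos (hxpos n) 2
    simpa [sq_abs] using this
  have hapos : ∀ n, 0 < a n := fun n => div_pos one_pos (hxsq n)
  have haa : ∀ n, a n ≤ a 0 := by
    intro n
    apply div_le_div_of_nonneg_left one_pos.le (hxsq 0)
    have h := pow_le_pow_left₀ (abs_nonneg (x 0)) (hx0le n) 2
    simpa [sq_abs] using h
  have hsa : Summable a := hsum
  set S1 : ℝ := ∑' n, a n with hS1_def
  have hS1nonneg : 0 ≤ S1 := tsum_nonneg fun n => (hapos n).le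
  have hpartial : ∀ N, ∑ n ∈ Finset.range N, a n ≤ S1 := fun N =>
    Summable.sum_le_tsum _ (fun i _ => (hapos i).le) hsa
  have hsa2 : Summable fun n => (a n) ^ 2 := by
    apply Summable.of_nonneg_of_le (fun n => sq_nonneg _) (fun n => ?_) (hsa.mul_left (a 0))
    calc (a n) ^ 2 = a n * a n := sq (a n) ▸ by ring
      _ ≤ a 0 * a n := mul_le_mul_of_nonneg_right (haa n) (hapos n).le
  set S2 : ℝ := ∑' n, (a n) ^ 2 with hS2_def
  set F3 : ℝ := qFact q 3 with hF3_def
  set F5 : ℝ := qFact q 5 with hF5_def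
  set A : ℝ := S1 - 1 / F3 with hA_def
  set B : ℝ := 1 / F5 - (S1 ^ 2 - S2) / 2 with hB_def
  set C : ℝ := S1 ^ 3 / 2 + 2 with hC_def
  have hCpos : 0 < C := by positivity
  set ε : ℝ := min (1/2) (1 / (2 * a 0)) with hε_def
  have hεpos : 0 < ε := lt_min (by norm_num) (div_pos one_pos (by linarith [hapos 0]))
  -- the key estimate
  have key : ∀ s : ℝ, 0 < s → s ≤ ε → |A + s * B| ≤ s ^ 2 * C := by
    intro s hs hsε
    have hs12 : s ≤ 1 / 2 := le_trans hsε (min_le_left _ _)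
    have hsa0 : s * a 0 ≤ 1 / 2 := by
      have h := le_trans hsε (min_le_right _ _)
      rw [le_div_iff₀ (by linarith [hapos 0])] at h
      nlinarith
    have hsan : ∀ n, s * a n ≤ 1 / 2 := fun n =>
      le_trans (mul_le_mul_of_nonneg_left (haa n) hs.le) hsa0
    have hpos1 : ∀ n, (0:ℝ) < 1 - s * a n := fun n => by linarith [hsan n]
    have hlogsum : Summable fun n => Real.log (1 - s * a n) := by
      apply Summable.of_abs
      apply Summable.of_nonneg_of_le (fun n => abs_nonneg _) (fun n => ?_) (hsa.mul_left (2 * s))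
      calc |Real.log (1 - s * a n)|
          ≤ 2 * (s * a n) :=
            abs_log_one_sub_le (mul_nonneg hs.le (hapos n).le) (hsan n)
        _ = 2 * s * a n := by ring
    have hmult : Multipliable fun n => 1 - s * a n :=
      Real.multipliable_of_summable_log (fun n => hpos1 n) hlogsum
    set G : ℝ := ∏' n, (1 - s * a n) with hG_def
    have hG : Filter.Tendsto (fun N => ∏ n ∈ Finset.range N, (1 - s * a n))
        Filter.atTop (nhds G) := hmult.hasProd.tendsto_prod_nat
    have hts1 : Filter.Tendsto (fun N => ∑ n ∈ Finset.range N, a n)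
        Filter.atTop (nhds S1) := hsa.hasSum.tendsto_sum_nat
    have hts2 : Filter.Tendsto (fun N => ∑ n ∈ Finset.range N, (a n) ^ 2)
        Filter.atTop (nhds S2) := hsa2.hasSum.tendsto_sum_nat
    have hinner : Filter.Tendsto (fun N => 1 - s * (∑ n ∈ Finset.range N, a n)
        + s ^ 2 * ((∑ n ∈ Finset.range N, a n) ^ 2 - ∑ n ∈ Finset.range N, (a n) ^ 2) / 2)
        Filter.atTop (nhds (1 - s * S1 + s ^ 2 * (S1 ^ 2 - S2) / 2)) := by
      exact (tendsto_const_nhds.sub (hts1.const_mul s)).add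
        ((((hts1.pow 2).sub hts2).const_mul (s ^ 2)).div_const 2)
    have habs_lim : Filter.Tendsto (fun N =>
        |(∏ n ∈ Finset.range N, (1 - s * a n)) - (1 - s * (∑ n ∈ Finset.range N, a n)
          + s ^ 2 * ((∑ n ∈ Finset.range N, a n) ^ 2 - ∑ n ∈ Finset.range N, (a n) ^ 2) / 2)|)
        Filter.atTop (nhds (|G - (1 - s * S1 + s ^ 2 * (S1 ^ 2 - S2) / 2)|)) :=
      (hG.sub hinner).abs
    have hGle : |G - (1 - s * S1 + s ^ 2 * (S1 ^ 2 - S2) / 2)| ≤ s ^ 3 * (S1 ^ 2 / 2) * S1 := by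
      apply le_of_tendsto habs_lim
      apply Filter.Eventually.of_forall
      intro N
      refine le_trans (prod_one_sub_approx a (fun n => (hapos n).le) s S1 hs.le
        (fun n => by linarith [hsan n]) hpartial N) ?_
      exact mul_le_mul_of_nonneg_left (hpartial N) (by positivity)
    -- connect with qSin via t = √s
    set t : ℝ := Real.sqrt s with ht_def
    have ht2 : t ^ 2 = s := Real.sq_sqrt hs.le
    have htpos : 0 < t := Real.sqrt_pos.mpr hs
    have habs_t : |t| = t := abs_of_pos htpos
    have hxprod : (∏' n : ℕ, (1 - t ^ 2 / (x n) ^ 2)) = G := by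
      apply tprod_congr
      intro n
      rw [ht2]
      have : a n = 1 / (x n) ^ 2 := rfl
      rw [this, mul_one_div]
    have hqs := qSin_approx hq t (by rw [ht2]; exact hs12)
    have hqsG : qSin q t = t * G := by rw [hprod t, hxprod]
    rw [hqsG, ← hF3_def, ← hF5_def] at hqs
    have h2 : |t * G - (t - t ^ 3 * S1 + t ^ 5 * ((S1 ^ 2 - S2) / 2))| ≤ t ^ 7 * (S1 ^ 3 / 2) := by
      have he : t * G - (t - t ^ 3 * S1 + t ^ 5 * ((S1 ^ 2 - S2) / 2))
          = t * (G - (1 - s * S1 + s ^ 2 * (S1 ^ 2 - S2) / 2)) := by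
        rw [← ht2]; ring
      rw [he, abs_mul, habs_t]
      calc t * |G - (1 - s * S1 + s ^ 2 * (S1 ^ 2 - S2) / 2)|
          ≤ t * (s ^ 3 * (S1 ^ 2 / 2) * S1) := mul_le_mul_of_nonneg_left hGle htpos.le
        _ = t ^ 7 * (S1 ^ 3 / 2) := by rw [← ht2]; ring
    have h3 : |t ^ 3 * (A + s * B)| ≤ t ^ 7 * C := by
      have he : t ^ 3 * (A + s * B)
          = (t * G - (t - t ^ 3 * S1 + t ^ 5 * ((S1 ^ 2 - S2) / 2)))
            - (t * G - (t - t ^ 3 / F3 + t ^ 5 / F5)) := by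
        rw [hA_def, hB_def, ← ht2]; ring
      rw [he]
      calc |(t * G - (t - t ^ 3 * S1 + t ^ 5 * ((S1 ^ 2 - S2) / 2)))
            - (t * G - (t - t ^ 3 / F3 + t ^ 5 / F5))|
          ≤ |t * G - (t - t ^ 3 * S1 + t ^ 5 * ((S1 ^ 2 - S2) / 2))|
            + |t * G - (t - t ^ 3 / F3 + t ^ 5 / F5)| := abs_sub _ _
        _ ≤ t ^ 7 * (S1 ^ 3 / 2) + 2 * |t| ^ 7 := add_le_add h2 hqs
        _ = t ^ 7 * C := by rw [habs_t, hC_def]; ring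
    have ht3 : |t ^ 3 * (A + s * B)| = t ^ 3 * |A + s * B| := by
      rw [abs_mul, abs_of_pos (pow_pos htpos 3)]
    rw [ht3] at h3
    have h4 : t ^ 3 * |A + s * B| ≤ t ^ 3 * (t ^ 4 * C) := by
      calc t ^ 3 * |A + s * B| ≤ t ^ 7 * C := h3
        _ = t ^ 3 * (t ^ 4 * C) := by ring
    have h5 : |A + s * B| ≤ t ^ 4 * C :=
      le_of_mul_le_mul_left h4 (pow_pos htpos 3)
    calc |A + s * B| ≤ t ^ 4 * C := h5
      _ = s ^ 2 * C := by rw [← ht2]; ring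
  -- take the limit along s_k = ε/(k+1) to conclude A = 0 and B = 0
  have hslim : Filter.Tendsto (fun k : ℕ => ε * (1 / (k + 1 : ℝ)))
      Filter.atTop (nhds 0) := by
    simpa using tendsto_one_div_add_atTop_nhds_zero_nat.const_mul ε
  have hsk_pos : ∀ k : ℕ, 0 < ε * (1 / (k + 1 : ℝ)) := fun k => by positivity
  have hsk_le : ∀ k : ℕ, ε * (1 / (k + 1 : ℝ)) ≤ ε := fun k => by
    rw [mul_one_div, div_le_iff₀ (by positivity)]
    nlinarith [hεpos, (Nat.cast_nonneg k : (0:ℝ) ≤ (k : ℝ))]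
  have hA0 : A = 0 := by
    have hbound : ∀ k : ℕ, |A| ≤ (ε * (1 / (k + 1 : ℝ))) ^ 2 * C
        + (ε * (1 / (k + 1 : ℝ))) * |B| := by
      intro k
      have hk := key _ (hsk_pos k) (hsk_le k)
      calc |A| = |(A + (ε * (1 / (k + 1 : ℝ))) * B) - (ε * (1 / (k + 1 : ℝ))) * B| := by
            congr 1; ring
        _ ≤ |A + (ε * (1 / (k + 1 : ℝ))) * B| + |(ε * (1 / (k + 1 : ℝ))) * B| := abs_sub _ _
        _ ≤ (ε * (1 / (k + 1 : ℝ))) ^ 2 * C + (ε * (1 / (k + 1 : ℝ))) * |B| := by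
            rw [abs_mul, abs_of_pos (hsk_pos k)]
            exact add_le_add hk le_rfl
    have hlim0 : Filter.Tendsto (fun k : ℕ => (ε * (1 / (k + 1 : ℝ))) ^ 2 * C
        + (ε * (1 / (k + 1 : ℝ))) * |B|) Filter.atTop (nhds 0) := by
      have h := ((hslim.pow 2).mul_const C).add (hslim.mul_const |B|)
      simpa using h
    have hle : |A| ≤ 0 := ge_of_tendsto hlim0 (Filter.Eventually.of_forall hbound)
    exact abs_eq_zero.mp (le_antisymm hle (abs_nonneg _))
  have hB0 : B = 0 := by
    have hbound : ∀ k : ℕ, |B| ≤ (ε * (1 / (k + 1 : ℝ))) * C := by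
      intro k
      have hk := key _ (hsk_pos k) (hsk_le k)
      rw [hA0, zero_add, abs_mul, abs_of_pos (hsk_pos k)] at hk
      have hk2 : (ε * (1 / (k + 1 : ℝ))) * |B|
          ≤ (ε * (1 / (k + 1 : ℝ))) * ((ε * (1 / (k + 1 : ℝ))) * C) := by
        calc (ε * (1 / (k + 1 : ℝ))) * |B| ≤ (ε * (1 / (k + 1 : ℝ))) ^ 2 * C := hk
          _ = (ε * (1 / (k + 1 : ℝ))) * ((ε * (1 / (k + 1 : ℝ))) * C) := by ring
      exact le_of_mul_le_mul_left hk2 (hsk_pos k)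
    have hlim0 : Filter.Tendsto (fun k : ℕ => (ε * (1 / (k + 1 : ℝ))) * C)
        Filter.atTop (nhds 0) := by simpa using hslim.mul_const C
    have hle : |B| ≤ 0 := ge_of_tendsto hlim0 (Filter.Eventually.of_forall hbound)
    exact abs_eq_zero.mp (le_antisymm hle (abs_nonneg _))
  -- extract the values of S1 and S2
  rw [hA_def] at hA0
  rw [hB_def] at hB0
  have hS1v : S1 = 1 / F3 := by linarith
  rw [hS1v] at hB0
  have hS2v : S2 = (1 / F3) ^ 2 - 2 * (1 / F5) := by linarith
  -- finish with the algebraic identity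
  have htsum4 : (∑' k : ℕ, 1 / (x k) ^ 4) = S2 := by
    rw [hS2_def]
    apply tsum_congr
    intro k
    have hak : a k = 1 / (x k) ^ 2 := rfl
    rw [hak, div_pow, one_pow, ← pow_mul]
  rw [htsum4, hS2v, hb2, hb4, hF3_def, hF5_def]
  exact qAlgebra q hq
end

section
/- Let q > 1 be real and let (x_n)_{n≥1} be a sequence of nonzero real numbers with 0 < |x₁| < |x₂| < ⋯ such that sin_q x = x·∏_{n=1}^∞ (1 − x²/x_n²) for all real x, with the product converging absolutely. Then for every real x with 0 < |x| < |x₁| the q-logarithmic derivative of sin_q admits the pole expansion x · (D_q sin_q)(x)/sin_q(x) = 1 − [2]_q · q · ∑_{n=1}^∞ [ (x²/x_n²)/(1 − x²/x_n²) · ∏_{k=1}^{n−1} (1 − q² x²/x_k²)/(1 − x²/x_k²) ], the series on the right converging. -/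
set_option maxHeartbeats 1000000 in
/-- If the `c n` are nonnegative and summable, the product `∏ (1 - c n)` converges; it is
positive when moreover every `c n < 1`. -/
lemma aux_hasProd_one_sub (c : ℕ → ℝ) (h0 : ∀ n, 0 ≤ c n) (hc : Summable c) :
    ∃ L : ℝ, HasProd (fun n => 1 - c n) L ∧ ((∀ n, c n < 1) → 0 < L) := by
  have hten : Filter.Tendsto c Filter.atTop (nhds 0) := hc.tendsto_atTop_zero
  obtain ⟨N, hN⟩ : ∃ N, ∀ n ≥ N, c n ≤ 1 / 2 := by
    have h := hten.eventually (eventually_le_nhds (by norm_num : (0 : ℝ) < 1 / 2))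
    exact Filter.eventually_atTop.1 h
  have hd : Summable fun n => c (n + N) := (summable_nat_add_iff N).2 hc
  have hdpos : ∀ n : ℕ, 0 < 1 - c (n + N) := by
    intro n
    have := hN (n + N) (Nat.le_add_left N n)
    linarith
  have hlog : Summable fun n => Real.log (1 - c (n + N)) := by
    refine Summable.of_norm_bounded (g := fun n => 2 * c (n + N)) (hd.mul_left 2) fun n => ?_
    have h2 : c (n + N) ≤ 1 / 2 := hN (n + N) (Nat.le_add_left N n)
    have h0' : 0 ≤ c (n + N) := h0 _
    have hle : Real.log (1 - c (n + N)) ≤ 0 :=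
      Real.log_nonpos (le_of_lt (hdpos n)) (by linarith)
    have hinv : -Real.log (1 - c (n + N)) ≤ (1 - c (n + N))⁻¹ - 1 := by
      rw [← Real.log_inv]
      exact Real.log_le_sub_one_of_pos (inv_pos.2 (hdpos n))
    have h3 : (1 - c (n + N))⁻¹ ≤ 1 + 2 * c (n + N) := by
      rw [inv_le_iff_one_le_mul₀ (hdpos n)]
      nlinarith
    show |Real.log (1 - c (n + N))| ≤ 2 * c (n + N)
    rw [abs_of_nonpos hle]
    linarith
  have htail : HasProd (fun n => 1 - c (n + N))
      (Real.exp (∑' n, Real.log (1 - c (n + N)))) := by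
    refine (hlog.hasSum.rexp).congr_fun fun n => ?_
    exact (Real.exp_log (hdpos n)).symm
  refine ⟨(∏ i ∈ Finset.range N, (1 - c i)) * Real.exp (∑' n, Real.log (1 - c (n + N))),
    htail.prod_range_mul, fun h1 => ?_⟩
  exact mul_pos (Finset.prod_pos fun i _ => by linarith [h1 i]) (Real.exp_pos _)

/-- If `q > 1` and `(x_n)` is a sequence of nonzero reals with `0 < |x₁| < |x₂| < ⋯` such
that `sin_q x = x ∏_{n≥1} (1 - x²/x_n²)` for all real `x`, the product converging absolutely,
then for every real `x` with `0 < |x| < |x₁|` the q-logarithmic derivative of `sin_q`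
admits the pole expansion
`x (D_q sin_q)(x)/sin_q(x)
  = 1 - [2]_q q ∑_{n≥1} (x²/x_n²)/(1 - x²/x_n²) ∏_{k=1}^{n-1} (1 - q²x²/x_k²)/(1 - x²/x_k²)`,
the series on the right converging.  (Here `x n` denotes `x_{n+1}`.) -/
theorem qSin_qLog_derivative_pole_expansion (q : ℝ) (hq : 1 < q) (x : ℕ → ℝ)
    (hx0 : 0 < |x 0|) (hmono : ∀ n, |x n| < |x (n + 1)|)
    (habs : ∀ t : ℝ, Summable fun n => |t ^ 2 / (x n) ^ 2|)
    (hprod : ∀ t : ℝ, qSin q t = t * ∏' n : ℕ, (1 - t ^ 2 / (x n) ^ 2)) :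
    ∀ t : ℝ, 0 < |t| → |t| < |x 0| →
      Summable (fun n : ℕ =>
        (t ^ 2 / (x n) ^ 2) / (1 - t ^ 2 / (x n) ^ 2) *
          ∏ k ∈ Finset.range n, (1 - q ^ 2 * t ^ 2 / (x k) ^ 2) / (1 - t ^ 2 / (x k) ^ 2)) ∧
      t * qDeriv q (qSin q) t / qSin q t =
        1 - qNum q 2 * q * ∑' n : ℕ,
          (t ^ 2 / (x n) ^ 2) / (1 - t ^ 2 / (x n) ^ 2) *
            ∏ k ∈ Finset.range n, (1 - q ^ 2 * t ^ 2 / (x k) ^ 2) / (1 - t ^ 2 / (x k) ^ 2) := by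
  intro t ht0 ht1
  have ht : t ≠ 0 := fun h => by simp [h] at ht0
  have hq1 : q - 1 ≠ 0 := by linarith
  have hq2 : q ^ 2 - 1 ≠ 0 := by nlinarith
  -- basic facts about the sequence
  have hub : ∀ n, |x 0| ≤ |x n| := by
    intro n
    induction n with
    | zero => exact le_refl _
    | succ k ih => exact le_trans ih (le_of_lt (hmono k))
  have hxpos : ∀ n, 0 < (x n) ^ 2 := by
    intro n
    have h : 0 < |x n| := lt_of_lt_of_le hx0 (hub n)
    have hne0 : x n ≠ 0 := by simpa [abs_pos] using h
    positivity
  have ha0 : ∀ n, 0 ≤ t ^ 2 / (x n) ^ 2 :=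
    fun n => div_nonneg (sq_nonneg t) (le_of_lt (hxpos n))
  have ha1 : ∀ n, t ^ 2 / (x n) ^ 2 < 1 := by
    intro n
    rw [div_lt_one (hxpos n)]
    have h : |t| < |x n| := lt_of_lt_of_le ht1 (hub n)
    nlinarith [sq_abs t, sq_abs (x n), abs_nonneg t]
  have hne : ∀ n, (1 : ℝ) - t ^ 2 / (x n) ^ 2 ≠ 0 :=
    fun n => ne_of_gt (by linarith [ha1 n])
  have haa : ∀ n, t ^ 2 / (x n) ^ 2 ≤ t ^ 2 / (x 0) ^ 2 := by
    intro n
    have h : (x 0) ^ 2 ≤ (x n) ^ 2 := by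
      nlinarith [sq_abs (x 0), sq_abs (x n), hub n, abs_nonneg (x 0)]
    exact div_le_div_of_nonneg_left (sq_nonneg t) (hxpos 0) h
  -- summability of the two coefficient sequences
  have hsum : Summable fun n => t ^ 2 / (x n) ^ 2 := summable_abs_iff.mp (habs t)
  have hsumq : Summable fun n => q ^ 2 * t ^ 2 / (x n) ^ 2 := by
    have := summable_abs_iff.mp (habs (q * t))
    refine this.congr fun n => ?_
    rw [mul_pow]
  have h0q : ∀ n, 0 ≤ q ^ 2 * t ^ 2 / (x n) ^ 2 := by
    intro n
    have : 0 ≤ q ^ 2 * t ^ 2 := by positivity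
    exact div_nonneg this (le_of_lt (hxpos n))
  -- the two convergent products
  obtain ⟨Lt, hLt, hLtpos'⟩ := aux_hasProd_one_sub _ ha0 hsum
  have hLtpos : 0 < Lt := hLtpos' ha1
  obtain ⟨Lq, hLq, -⟩ := aux_hasProd_one_sub _ h0q hsumq
  have htprod_t : (∏' n : ℕ, (1 - t ^ 2 / (x n) ^ 2)) = Lt := hLt.tprod_eq
  have htprod_q : (∏' n : ℕ, (1 - (q * t) ^ 2 / (x n) ^ 2)) = Lq := by
    rw [← hLq.tprod_eq]
    exact tprod_congr fun n => by rw [mul_pow]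
  -- partial products
  set r : ℕ → ℝ := fun n =>
    ∏ k ∈ Finset.range n, (1 - q ^ 2 * t ^ 2 / (x k) ^ 2) / (1 - t ^ 2 / (x k) ^ 2) with hr_def
  have hr : Filter.Tendsto r Filter.atTop (nhds (Lq / Lt)) := by
    have h1 := hLq.tendsto_prod_nat
    have h2 := hLt.tendsto_prod_nat
    refine (h1.div h2 (ne_of_gt hLtpos)).congr fun n => ?_
    simp [hr_def, Finset.prod_div_distrib]
  set term : ℕ → ℝ := fun n =>
    (t ^ 2 / (x n) ^ 2) / (1 - t ^ 2 / (x n) ^ 2) * r n with hterm_def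
  -- telescoping
  have key : ∀ a r0 : ℝ, 1 - a ≠ 0 →
      a / (1 - a) * r0 = (r0 - r0 * ((1 - q ^ 2 * a) / (1 - a))) / (q ^ 2 - 1) := by
    intro a r0 ha0
    field_simp
    ring
  have htel : ∀ n, term n = (r n - r (n + 1)) / (q ^ 2 - 1) := by
    intro n
    have hrs : r (n + 1) = r n * ((1 - q ^ 2 * t ^ 2 / (x n) ^ 2) / (1 - t ^ 2 / (x n) ^ 2)) :=
      Finset.prod_range_succ _ n
    simp only [hterm_def]
    rw [hrs, show (1 : ℝ) - q ^ 2 * t ^ 2 / (x n) ^ 2 = 1 - q ^ 2 * (t ^ 2 / (x n) ^ 2) by ring]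
    exact key _ _ (hne n)
  have hpartial : ∀ N, ∑ n ∈ Finset.range N, term n = (1 - r N) / (q ^ 2 - 1) := by
    intro N
    calc ∑ n ∈ Finset.range N, term n
        = ∑ n ∈ Finset.range N, (r n - r (n + 1)) / (q ^ 2 - 1) :=
          Finset.sum_congr rfl fun n _ => htel n
      _ = (∑ n ∈ Finset.range N, (r n - r (n + 1))) / (q ^ 2 - 1) :=
          (Finset.sum_div _ _ _).symm
      _ = (r 0 - r N) / (q ^ 2 - 1) := by rw [Finset.sum_range_sub' r N]
      _ = (1 - r N) / (q ^ 2 - 1) := by simp [hr_def]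
  -- summability of the series
  obtain ⟨C, hC⟩ : ∃ C, ∀ n, |r n| ≤ C := by
    obtain ⟨C, hC⟩ := hr.abs.bddAbove_range
    exact ⟨C, fun n => hC (Set.mem_range_self n)⟩
  have hsummable : Summable term := by
    refine Summable.of_norm_bounded
      (g := fun n => C / (1 - t ^ 2 / (x 0) ^ 2) * (t ^ 2 / (x n) ^ 2)) (hsum.mul_left _) fun n => ?_
    have h0' := ha0 n
    have h1' := ha1 n
    have h1'' := ha1 0
    have hCpos : 0 ≤ C := le_trans (abs_nonneg _) (hC 0)
    have hbpos : (0 : ℝ) < 1 - t ^ 2 / (x 0) ^ 2 := by linarith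
    have hapos : (0 : ℝ) < 1 - t ^ 2 / (x n) ^ 2 := by linarith
    show |t ^ 2 / (x n) ^ 2 / (1 - t ^ 2 / (x n) ^ 2) * r n|
      ≤ C / (1 - t ^ 2 / (x 0) ^ 2) * (t ^ 2 / (x n) ^ 2)
    rw [abs_mul, abs_of_nonneg (div_nonneg h0' (le_of_lt hapos))]
    have step1 : t ^ 2 / (x n) ^ 2 / (1 - t ^ 2 / (x n) ^ 2)
        ≤ t ^ 2 / (x n) ^ 2 / (1 - t ^ 2 / (x 0) ^ 2) :=
      div_le_div_of_nonneg_left h0' hbpos (by linarith [haa n])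
    calc t ^ 2 / (x n) ^ 2 / (1 - t ^ 2 / (x n) ^ 2) * |r n|
        ≤ t ^ 2 / (x n) ^ 2 / (1 - t ^ 2 / (x 0) ^ 2) * C :=
          mul_le_mul step1 (hC n) (abs_nonneg _)
            (div_nonneg h0' (le_of_lt hbpos))
      _ = C / (1 - t ^ 2 / (x 0) ^ 2) * (t ^ 2 / (x n) ^ 2) := by ring
  -- value of the series
  have htsum : ∑' n, term n = (1 - Lq / Lt) / (q ^ 2 - 1) := by
    have h3 : Filter.Tendsto (fun N => ∑ n ∈ Finset.range N, term n)
        Filter.atTop (nhds ((1 - Lq / Lt) / (q ^ 2 - 1))) := by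
      refine (((tendsto_const_nhds.sub hr).div_const _)).congr fun N => ?_
      exact (hpartial N).symm
    exact tendsto_nhds_unique hsummable.hasSum.tendsto_sum_nat h3
  refine ⟨hsummable, ?_⟩
  have hvq : qSin q (q * t) = q * t * Lq := by rw [hprod (q * t), htprod_q]
  have hvt : qSin q t = t * Lt := by rw [hprod t, htprod_t]
  show t * qDeriv q (qSin q) t / qSin q t = 1 - qNum q 2 * q * ∑' n, term n
  rw [htsum, qDeriv, hvq, hvt, qNum]
  have hLtne : Lt ≠ 0 := ne_of_gt hLtpos
  field_simp
  ring
end
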